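/- arXiv:1809.06829 — 3 statements merged into one kernel-verified Lean document; each statement's English description precedes it below -/
import Mathlib

section
/- Let X be a metric space, A ⊂ ℝ^{n+m} a measurable set of positive Lebesgue measure, and f : A → X a Lipschitz map. If the upper n-density Θ^{*n}(f,x) > 0 on a subset of A of positive Lebesgue measure, then ℋ^n(f(A)) > 0, where ℋ^n denotes the n-dimensional Hausdorff measure on X. -/
open MeasureTheory Metric Set Filter
open scoped ENNReal NNReal Topology

noncomputable section

abbrev EucSp (k : ℕ) := EuclideanSpace ℝ (Fin k)

/-- The volume of the unit ball in `ℝ^n`. -/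
def unitBallVol (n : ℕ) : ℝ≥0∞ := volume (Metric.ball (0 : EucSp n) 1)

/-- The `n`-dimensional Hausdorff content. -/
def hContent {X : Type*} [PseudoEMetricSpace X] (n : ℕ) (E : Set X) : ℝ≥0∞ :=
  ⨅ (A : ℕ → Set X) (_ : E ⊆ ⋃ i, A i),
    unitBallVol n / 2 ^ n * ∑' i, EMetric.diam (A i) ^ n

/-- Upper n-density. -/
def upperDensity {k : ℕ} {X : Type*} [PseudoEMetricSpace X] (n : ℕ)
    (f : EucSp k → X) (A : Set (EucSp k)) (x : EucSp k) : ℝ≥0∞ :=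
  Filter.limsup
    (fun r : ℝ => hContent n (f '' (Metric.ball x r ∩ A)) /
      (unitBallVol n * ENNReal.ofReal r ^ n)) (𝓝[>] (0:ℝ))

def lowerDensity {k : ℕ} {X : Type*} [PseudoEMetricSpace X] (n : ℕ)
    (f : EucSp k → X) (A : Set (EucSp k)) (x : EucSp k) : ℝ≥0∞ :=
  Filter.liminf
    (fun r : ℝ => hContent n (f '' (Metric.ball x r ∩ A)) /
      (unitBallVol n * ENNReal.ofReal r ^ n)) (𝓝[>] (0:ℝ))

def IsDensityPoint {k : ℕ} (E : Set (EucSp k)) (x : EucSp k) : Prop :=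
  Filter.Tendsto (fun r : ℝ => volume (E ∩ Metric.ball x r) / volume (Metric.ball x r))
    (𝓝[>] (0:ℝ)) (𝓝 1)

def HasApproxDerivWithinAt {k : ℕ} (A : Set (EucSp k)) (f : EucSp k → ℝ)
    (L : EucSp k →ₗ[ℝ] ℝ) (x : EucSp k) : Prop :=
  ∃ Ax : Set (EucSp k), Ax ⊆ A ∧ MeasurableSet Ax ∧ IsDensityPoint Ax x ∧
    Filter.Tendsto (fun y => |f y - f x - L (y - x)| / ‖y - x‖) (𝓝[Ax] x) (𝓝 0)

abbrev LpInfty := lp (fun _ : ℕ => ℝ) ∞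

def HasCompApproxDerivWithinAt {k : ℕ} (A : Set (EucSp k)) (f : EucSp k → LpInfty)
    (D : EucSp k →ₗ[ℝ] (ℕ → ℝ)) (x : EucSp k) : Prop :=
  ∀ i : ℕ, HasApproxDerivWithinAt A (fun y => f y i) ((LinearMap.proj i).comp D) x

def IsBiLipC1DiffeoOn {k : ℕ} (G Ginv : EucSp k → EucSp k) (U : Set (EucSp k)) : Prop :=
  IsOpen U ∧ IsOpen (G '' U) ∧ (∀ x ∈ U, Ginv (G x) = x) ∧ (∀ y ∈ G '' U, G (Ginv y) = y) ∧
    ContDiffOn ℝ 1 G U ∧ ContDiffOn ℝ 1 Ginv (G '' U) ∧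
    ∃ Λ : ℝ≥0, LipschitzOnWith Λ G U ∧ LipschitzOnWith Λ Ginv (G '' U)

def IsFinCoordPerm (Ψ : LpInfty → LpInfty) : Prop :=
  ∃ σ : Equiv.Perm ℕ, {i | σ i ≠ i}.Finite ∧ ∀ (x : LpInfty) (i : ℕ), Ψ x i = x (σ i)

def openCube {k : ℕ} (c : EucSp k) (d : ℝ) : Set (EucSp k) := {x | ∀ i, |x i - c i| < d / 2}

def closedCube {k : ℕ} (c : EucSp k) (d : ℝ) : Set (EucSp k) := {x | ∀ i, |x i - c i| ≤ d / 2}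

def hnmContent {N : ℕ} {X : Type*} [PseudoEMetricSpace X] (n m : ℕ)
    (f : EucSp N → X) (Q : Set (EucSp N)) : ℝ≥0∞ :=
  ⨅ (c : ℕ → EucSp N) (d : ℕ → ℝ) (_ : ∀ j, 0 ≤ d j) (_ : ∀ j, openCube (c j) (d j) ⊆ Q)
    (_ : Pairwise (Function.onFun Disjoint fun j => openCube (c j) (d j)))
    (_ : volume (Q \ ⋃ j, openCube (c j) (d j)) = 0),
    ∑' j, hContent n (f '' openCube (c j) (d j)) * ENNReal.ofReal (d j) ^ m

def matrixRow {n k : ℕ} (D : Matrix (Fin n) (Fin k) ℝ) (i : Fin n) : EucSp k →ₗ[ℝ] ℝ :=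
  (EuclideanSpace.proj i).toLinearMap.comp (Matrix.toEuclideanLin D)

def jacDet {n k : ℕ} (D : Matrix (Fin n) (Fin k) ℝ) : ℝ := Real.sqrt ((D * D.transpose).det)

def upperLintegral {Y : Type*} [MeasurableSpace Y] (μ : Measure Y) (g : Y → ℝ≥0∞) : ℝ≥0∞ :=
  ⨅ (h : Y → ℝ≥0∞) (_ : Measurable h) (_ : ∀ y, g y ≤ h y), ∫⁻ y, h y ∂μ


/-!
Up to the factor `ω_n / 2^n`, the Hausdorff content is bounded by the Hausdorff measure. So if
`ℋ^n(f(A)) = 0`, every `f(B(x,r) ∩ A)` has zero content and `Θ^{*n}(f, ·)` vanishes identically.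
For `n = 0`, `ℋ^0` is the counting measure and `f(A)` is nonempty.
-/

lemma unitBallVol_ne_zero (n : ℕ) : unitBallVol n ≠ 0 :=
  (measure_ball_pos volume (0 : EucSp n) one_pos).ne'

lemma unitBallVol_ne_top (n : ℕ) : unitBallVol n ≠ ∞ :=
  measure_ball_lt_top.ne

section

variable {X : Type*} [EMetricSpace X] [MeasurableSpace X] [BorelSpace X]

lemma hContent_le_mul_hausdorffMeasure {n : ℕ} (hn : n ≠ 0) (E : Set X) :
    hContent n E ≤ unitBallVol n / 2 ^ n * μH[(n : ℝ)] E := by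
  set c := unitBallVol n / 2 ^ n
  have hc₀ : c ≠ 0 := by simp [c, unitBallVol_ne_zero]
  have hc : c ≠ ∞ := by simp [c, ENNReal.div_eq_top, unitBallVol_ne_top]
  -- covers of diameter at most `1` are admissible for the content and compute `ℋ^n` at scale `1`
  calc hContent n E
      ≤ ⨅ (t : ℕ → Set X) (_ : E ⊆ ⋃ i, t i) (_ : ∀ i, ediam (t i) ≤ 1),
          c * ∑' i, ⨆ _ : (t i).Nonempty, ediam (t i) ^ (n : ℝ) := ?_
    _ = c * ⨅ (t : ℕ → Set X) (_ : E ⊆ ⋃ i, t i) (_ : ∀ i, ediam (t i) ≤ 1),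
          ∑' i, ⨆ _ : (t i).Nonempty, ediam (t i) ^ (n : ℝ) := by
      simp_rw [ENNReal.mul_iInf_of_ne hc₀ hc]
    _ ≤ c * μH[(n : ℝ)] E := by
      rw [Measure.hausdorffMeasure_apply]
      gcongr
      exact le_iSup₂_of_le (1 : ℝ≥0∞) one_pos le_rfl
  refine le_iInf₂ fun t ht => le_iInf fun _ => (iInf₂_le t ht).trans ?_
  gcongr with i
  -- `hContent` is phrased with `EMetric.diam`, a deprecated alias of `ediam`
  show ediam (t i) ^ n ≤ ⨆ _ : (t i).Nonempty, ediam (t i) ^ (n : ℝ)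
  rcases (t i).eq_empty_or_nonempty with h | h
  · simp [h, hn]
  · rw [iSup_pos h, ENNReal.rpow_natCast]

lemma upperDensity_eq_zero_of_hausdorffMeasure_image_eq_zero {k n : ℕ} (hn : n ≠ 0)
    {f : EucSp k → X} {A : Set (EucSp k)} (h : μH[(n : ℝ)] (f '' A) = 0) (x : EucSp k) :
    upperDensity n f A x = 0 := by
  have hball : ∀ r, hContent n (f '' (ball x r ∩ A)) = 0 := fun r =>
    nonpos_iff_eq_zero.1 <| (hContent_le_mul_hausdorffMeasure hn _).trans <| by
      rw [measure_mono_null (image_mono inter_subset_right) h, mul_zero]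
  simp [upperDensity, hball]

end

theorem stmt0_general {n m : ℕ} {X : Type*} [MetricSpace X] [MeasurableSpace X] [BorelSpace X]
    (A : Set (EucSp (n + m))) (f : EucSp (n + m) → X)
    (hdens : 0 < volume {x ∈ A | 0 < upperDensity n f A x}) :
    0 < μH[(n : ℝ)] (f '' A) := by
  obtain ⟨x, hxA, hx⟩ := nonempty_of_measure_ne_zero hdens.ne'
  rcases eq_or_ne n 0 with rfl | hn
  · exact zero_lt_one.trans_le <| by
      simpa using Measure.one_le_hausdorffMeasure_zero_of_nonempty ⟨f x, mem_image_of_mem f hxA⟩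
  · refine pos_iff_ne_zero.2 fun h => ?_
    rw [upperDensity_eq_zero_of_hausdorffMeasure_image_eq_zero hn h] at hx
    exact lt_irrefl 0 hx

/-- Theorem, part (A): If `f : A → X` is Lipschitz on a set
`A ⊆ ℝ^{n+m}` of positive Lebesgue measure and the upper `n`-density
`Θ^{*n}(f,x)` is positive on a subset of `A` of positive Lebesgue measure,
then `ℋ^n(f(A)) > 0`. -/
theorem stmt0 {n m : ℕ} {X : Type*} [MetricSpace X] [MeasurableSpace X] [BorelSpace X]
    (A : Set (EucSp (n + m))) (hA : MeasurableSet A) (hApos : 0 < volume A)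
    (f : EucSp (n + m) → X) (hf : ∃ L : ℝ≥0, LipschitzOnWith L f A)
    (hdens : 0 < volume {x ∈ A | 0 < upperDensity n f A x}) :
    0 < μH[(n : ℝ)] (f '' A) :=
  stmt0_general A f hdens

end
end

section
/- Fix a constant Λ > 1. For every ε > 0 there exists a Lipschitz map f : [0,1]² → ℝ with Θ^{*1}(f,x) = Θ_*^1(f,x) = |J^1 f|(x) = 1 for almost every x, with the following property: for every measurable set K ⊂ [0,1]² and every Λ-bi-Lipschitz homeomorphism G : ℝ² → ℝ² such that the restriction of f∘G⁻¹ to (ℝ × {y}) ∩ G(K) is Λ-bi-Lipschitz for every y ∈ ℝ, one has ℋ²(K) < ε. -/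
/-!
The map is the sawtooth `f x = dist (x₀, dℤ)`. Off the null set `{x₀ ∈ (d/2)ℤ}` it is locally
`x ↦ ±x₀ + c`, so the image of a small ball is an interval of the same radius: both densities and
the Jacobian equal `1`. On the other hand `f` takes values in `[0, d/2]`, so if `f ∘ G⁻¹` is
`Λ`-bi-Lipschitz on the horizontal slices of `G(K)`, each slice has diameter at most `Λ d / 2`.
The slices live in a strip of height `2Λ · diam K`, so Fubini gives `|G(K)| ≤ Λ² d diam K`, and
`|K| ≤ Λ² |G(K)|` because `G⁻¹` is `Λ`-Lipschitz. Taking `d` small makes `|K| < ε`.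
-/

open MeasureTheory Metric Set Filter
open scoped ENNReal NNReal Topology

noncomputable section

/-- The unit square `[0,1]² ⊆ ℝ²`. -/
def unitSquare : Set (EucSp 2) := {x | ∀ i, x i ∈ Set.Icc (0 : ℝ) 1}

def sawtooth (d t : ℝ) : ℝ := infDist t (range fun k : ℤ => d * k)

section Sawtooth

variable {d : ℝ}

lemma lipschitzWith_sawtooth (d : ℝ) : LipschitzWith 1 (sawtooth d) := lipschitz_infDist_pt _

lemma abs_sub_mul_round_div_le (hd : 0 < d) (t : ℝ) : |t - d * round (t / d)| ≤ d / 2 := by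
  calc |t - d * round (t / d)| = d * |t / d - round (t / d)| := by
        rw [show t - d * round (t / d) = d * (t / d - round (t / d)) by field_simp, abs_mul,
          abs_of_pos hd]
    _ ≤ d * (1 / 2) := by gcongr; exact abs_sub_round _
    _ = d / 2 := by ring

lemma sawtooth_eq_abs_sub (hd : 0 < d) {k : ℤ} {u : ℝ} (hu : |u - d * k| ≤ d / 2) :
    sawtooth d u = |u - d * k| := by
  unfold sawtooth
  refine le_antisymm ((infDist_le_dist_of_mem (mem_range_self k)).trans_eq (Real.dist_eq _ _)) ?_
  refine (le_infDist (range_nonempty _)).2 ?_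
  rintro _ ⟨j, rfl⟩
  rw [Real.dist_eq]
  rcases eq_or_ne j k with rfl | hjk
  · rfl
  have hgap : d ≤ |d * j - d * k| := by
    rw [← mul_sub, abs_mul, abs_of_pos hd]
    refine le_mul_of_one_le_right hd.le ?_
    exact_mod_cast Int.one_le_abs (sub_ne_zero.2 hjk)
  have := abs_sub_le (d * j) u (d * k)
  rw [abs_sub_comm (d * j) u] at this
  show |u - d * k| ≤ |u - d * j|
  linarith

lemma sawtooth_nonneg (d t : ℝ) : 0 ≤ sawtooth d t := infDist_nonneg

lemma sawtooth_le (hd : 0 < d) (t : ℝ) : sawtooth d t ≤ d / 2 :=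
  (sawtooth_eq_abs_sub hd (abs_sub_mul_round_div_le hd t)).trans_le (abs_sub_mul_round_div_le hd t)

lemma dist_sawtooth_le (hd : 0 < d) (s t : ℝ) : dist (sawtooth d s) (sawtooth d t) ≤ d / 2 := by
  rw [Real.dist_eq, abs_sub_le_iff]
  constructor <;> linarith [sawtooth_le hd s, sawtooth_le hd t, sawtooth_nonneg d s,
    sawtooth_nonneg d t]

lemma sawtooth_eventuallyEq_affine (hd : 0 < d) {t : ℝ} (ht : ∀ k : ℤ, t ≠ d / 2 * k) :
    ∃ σ c : ℝ, |σ| = 1 ∧ sawtooth d =ᶠ[𝓝 t] fun u => σ * u + c := by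
  set k := round (t / d)
  have hne : t - d * k ≠ 0 := fun h => ht (2 * k) (by push_cast; linarith)
  have hlt : |t - d * k| < d / 2 := by
    refine (abs_sub_mul_round_div_le hd t).lt_of_ne fun h => ?_
    rcases abs_eq (by positivity) |>.1 h with h | h
    · exact ht (2 * k + 1) (by push_cast; linarith)
    · exact ht (2 * k - 1) (by push_cast; linarith)
  have hnear : ∀ᶠ u in 𝓝 t, |u - d * k| < d / 2 :=
    (continuous_id.sub continuous_const).abs.continuousAt.eventually_lt continuousAt_const hlt
  rcases hne.lt_or_gt with hneg | hpos
  · refine ⟨-1, d * k, by norm_num, ?_⟩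
    filter_upwards [hnear, eventually_lt_nhds (show t < d * k by linarith)] with u hu hu'
    rw [sawtooth_eq_abs_sub hd hu.le, abs_of_neg (by linarith)]
    ring
  · refine ⟨1, -(d * k), by norm_num, ?_⟩
    filter_upwards [hnear, eventually_gt_nhds (show d * k < t by linarith)] with u hu hu'
    rw [sawtooth_eq_abs_sub hd hu.le, abs_of_pos (by linarith)]
    ring

end Sawtooth

section Coordinates

variable {ι : Type*} [Fintype ι]

lemma lipschitzWith_apply (i : ι) : LipschitzWith 1 fun x : EuclideanSpace ℝ ι => x i :=
  LipschitzWith.of_dist_le_mul fun x y => by simpa using PiLp.dist_apply_le x y i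

lemma image_apply_ball [DecidableEq ι] (x : EuclideanSpace ℝ ι) (i : ι) (r : ℝ) :
    (fun y : EuclideanSpace ℝ ι => y i) '' ball x r = ball (x i) r := by
  ext t
  constructor
  · rintro ⟨y, hy, rfl⟩
    exact (PiLp.dist_apply_le y x i).trans_lt hy
  · intro ht
    refine ⟨x + EuclideanSpace.single i (t - x i), ?_, by simp⟩
    rwa [mem_ball, dist_self_add_left, PiLp.norm_single, Real.norm_eq_abs,
      ← Real.dist_eq]

lemma ae_apply_notMem (i : ι) {C : Set ℝ} (hC : volume C = 0) :
    ∀ᵐ x : EuclideanSpace ℝ ι, x i ∉ C :=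
  (PiLp.volume_preserving_ofLp ι).quasiMeasurePreserving.ae
    (Measure.tendsto_eval_ae_ae.eventually (measure_eq_zero_iff_ae_notMem.1 hC))

end Coordinates

lemma image_affine_ball {σ : ℝ} (hσ : |σ| = 1) (c t r : ℝ) :
    (fun u => σ * u + c) '' ball t r = ball (σ * t + c) r := by
  have hσσ : σ * σ = 1 := by rw [← abs_mul_abs_self, hσ, one_mul]
  ext v
  simp only [mem_image, mem_ball, Real.dist_eq]
  constructor
  · rintro ⟨u, hu, rfl⟩
    rwa [show σ * u + c - (σ * t + c) = σ * (u - t) by ring, abs_mul, hσ, one_mul]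
  · intro hv
    refine ⟨σ * (v - c), ?_, by rw [← mul_assoc, hσσ]; ring⟩
    rwa [show σ * (v - c) - t = σ * (v - (σ * t + c)) by linear_combination t * hσσ, abs_mul,
      hσ, one_mul]

section HausdorffContent

lemma hContent_one_le_ediam {X : Type*} [PseudoEMetricSpace X] (E : Set X) :
    hContent 1 E ≤ unitBallVol 1 / 2 * ediam E := by
  let A : ℕ → Set X := fun i => if i = 0 then E else ∅
  refine (iInf₂_le A fun x hx => mem_iUnion.2 ⟨0, by simpa [A] using hx⟩).trans_eq ?_
  -- `hContent` is written with the deprecated alias `EMetric.diam` of `ediam`.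
  show unitBallVol 1 / 2 ^ 1 * ∑' i, ediam (A i) ^ 1 = _
  rw [tsum_eq_single 0 fun i hi => by simp [A, hi]]
  simp [A]

lemma mul_volume_le_hContent_one (E : Set ℝ) : unitBallVol 1 / 2 * volume E ≤ hContent 1 E := by
  refine le_iInf₂ fun A hA => ?_
  show _ ≤ unitBallVol 1 / 2 ^ 1 * ∑' i, ediam (A i) ^ 1
  rw [pow_one]
  refine mul_le_mul_right ?_ _
  calc volume E ≤ ∑' i, volume (A i) := measure_mono hA |>.trans (measure_iUnion_le _)
    _ ≤ ∑' i, ediam (A i) ^ 1 := ENNReal.tsum_le_tsum fun i => by simpa using Real.volume_le_diam _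

lemma hContent_one_ball (a r : ℝ) : hContent 1 (ball a r) = unitBallVol 1 * ENNReal.ofReal r := by
  have hhalf : unitBallVol 1 / 2 * (2 * ENNReal.ofReal r) = unitBallVol 1 * ENNReal.ofReal r := by
    rw [← mul_assoc, ENNReal.div_mul_cancel two_ne_zero ENNReal.ofNat_ne_top]
  refine le_antisymm ((hContent_one_le_ediam _).trans ?_) ?_
  · rw [← hhalf, ← eball_ofReal]
    exact mul_le_mul_right ediam_eball_le _
  · calc unitBallVol 1 * ENNReal.ofReal r = unitBallVol 1 / 2 * volume (ball a r) := by
          rw [Real.volume_ball, ENNReal.ofReal_mul zero_le_two, ENNReal.ofReal_ofNat, hhalf]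
      _ ≤ hContent 1 (ball a r) := mul_volume_le_hContent_one _

end HausdorffContent

section LocallyAffineInOneCoordinate

variable {k : ℕ} {A : Set (EucSp k)} {x : EucSp k}

lemma isDensityPoint_of_mem_nhds {E : Set (EucSp k)} (hE : E ∈ 𝓝 x) : IsDensityPoint E x := by
  obtain ⟨ρ, hρ, hball⟩ := Metric.mem_nhds_iff.1 hE
  refine tendsto_const_nhds.congr' ?_
  filter_upwards [Ioo_mem_nhdsGT hρ] with r hr
  rw [inter_eq_right.2 ((ball_subset_ball hr.2.le).trans hball),
    ENNReal.div_self (measure_ball_pos _ _ hr.1).ne' measure_ball_lt_top.ne]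

lemma hasApproxDerivWithinAt_of_eventuallyEq {f : EucSp k → ℝ} {L : EucSp k →ₗ[ℝ] ℝ}
    (hA : A ∈ 𝓝 x) (hf : f =ᶠ[𝓝 x] fun y => f x + L (y - x)) :
    HasApproxDerivWithinAt A f L x := by
  obtain ⟨ρ, hρ, hball⟩ := Metric.mem_nhds_iff.1 (inter_mem hA hf)
  refine ⟨ball x ρ, fun y hy => (hball hy).1, measurableSet_ball,
    isDensityPoint_of_mem_nhds (ball_mem_nhds x hρ), ?_⟩
  refine tendsto_const_nhds.congr' (eventually_nhdsWithin_of_forall fun y hy => ?_)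
  have hy : f y = f x + L (y - x) := (hball hy).2
  simp [hy]

variable {g : ℝ → ℝ} {σ c : ℝ} {i : Fin k}

lemma eventually_hContent_image_ball (hσ : |σ| = 1) (hg : g =ᶠ[𝓝 (x i)] fun u => σ * u + c) :
    ∀ᶠ r in 𝓝[>] 0,
      hContent 1 ((fun y : EucSp k => g (y i)) '' ball x r) = unitBallVol 1 * ENNReal.ofReal r := by
  obtain ⟨r₀, hr₀, hgr₀⟩ := Metric.eventually_nhds_iff_ball.1 hg
  filter_upwards [Ioo_mem_nhdsGT hr₀] with r hr
  rw [← image_image g (fun y : EucSp k => y i), image_apply_ball,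
    EqOn.image_eq fun u hu => hgr₀ u (ball_subset_ball hr.2.le hu), image_affine_ball hσ,
    hContent_one_ball]

lemma upperDensity_eq_one_and_lowerDensity_eq_one (hA : A ∈ 𝓝 x) (hσ : |σ| = 1)
    (hg : g =ᶠ[𝓝 (x i)] fun u => σ * u + c) :
    upperDensity 1 (fun y => g (y i)) A x = 1 ∧ lowerDensity 1 (fun y => g (y i)) A x = 1 := by
  obtain ⟨ρ, hρ, hball⟩ := Metric.mem_nhds_iff.1 hA
  have hratio : (fun r => hContent 1 ((fun y : EucSp k => g (y i)) '' (ball x r ∩ A)) /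
      (unitBallVol 1 * ENNReal.ofReal r ^ 1)) =ᶠ[𝓝[>] 0] fun _ => 1 := by
    filter_upwards [eventually_hContent_image_ball hσ hg, Ioo_mem_nhdsGT hρ] with r hr hrρ
    rw [inter_eq_left.2 ((ball_subset_ball hrρ.2.le).trans hball), hr, pow_one]
    exact ENNReal.div_self
      (mul_ne_zero (measure_ball_pos _ _ one_pos).ne' (ENNReal.ofReal_pos.2 hrρ.1).ne')
      (ENNReal.mul_ne_top measure_ball_lt_top.ne ENNReal.ofReal_ne_top)
  exact ⟨(limsup_congr hratio).trans (limsup_const 1),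
    (liminf_congr hratio).trans (liminf_const 1)⟩

end LocallyAffineInOneCoordinate

lemma matrixRow_apply (a b : ℝ) (v : EucSp 2) : matrixRow !![a, b] 0 v = a * v 0 + b * v 1 := by
  simp [matrixRow, Matrix.mulVec, dotProduct, Fin.sum_univ_two]

lemma jacDet_row (a b : ℝ) : jacDet !![a, b] = √(a ^ 2 + b ^ 2) := by
  simp [jacDet, Matrix.vecMul, dotProduct, Fin.sum_univ_two, sq]

lemma hasApproxDerivWithinAt_comp_apply_zero {A : Set (EucSp 2)} {x : EucSp 2} {g : ℝ → ℝ}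
    {σ c : ℝ} (hA : A ∈ 𝓝 x) (hg : g =ᶠ[𝓝 (x 0)] fun u => σ * u + c) :
    HasApproxDerivWithinAt A (fun y => g (y 0)) (matrixRow !![σ, 0] 0) x := by
  refine hasApproxDerivWithinAt_of_eventuallyEq hA ?_
  filter_upwards [hg.comp_tendsto ((lipschitzWith_apply 0).continuous.tendsto x)] with y hy
  simp only [Function.comp_apply] at hy
  rw [hy, hg.eq_of_nhds, matrixRow_apply, PiLp.sub_apply]
  ring

lemma convex_unitSquare : Convex ℝ unitSquare := by
  intro x hx y hy a b ha hb hab i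
  simpa using convex_Icc (0 : ℝ) 1 (hx i) (hy i) ha hb hab

lemma ae_restrict_mem_nhds_of_convex {E : Type*} [NormedAddCommGroup E] [NormedSpace ℝ E]
    [MeasurableSpace E] [BorelSpace E] [FiniteDimensional ℝ E] (μ : Measure E)
    [μ.IsAddHaarMeasure] {s : Set E} (hs : Convex ℝ s) : ∀ᵐ x ∂μ.restrict s, s ∈ 𝓝 x := by
  filter_upwards [ae_restrict_of_ae (measure_eq_zero_iff_ae_notMem.1 (hs.addHaar_frontier μ)),
    ae_restrict_mem₀ (hs.nullMeasurableSet μ)] with x hxf hxs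
  exact mem_interior_iff_mem_nhds.1 (self_sdiff_frontier s ▸ ⟨hxs, hxf⟩)

theorem LipschitzWith.addHaar_image_le {E : Type*} [NormedAddCommGroup E] [NormedSpace ℝ E]
    [FiniteDimensional ℝ E] [MeasurableSpace E] [BorelSpace E] (μ : Measure E)
    [μ.IsAddHaarMeasure] {K : ℝ≥0} {f : E → E} (hf : LipschitzWith K f) (s : Set E) :
    μ (f '' s) ≤ (K : ℝ≥0∞) ^ Module.finrank ℝ E * μ s := by
  have hμ : μ = μ.addHaarScalarFactor μH[Module.finrank ℝ E] • μH[Module.finrank ℝ E] :=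
    Measure.isAddLeftInvariant_eq_smul _ _
  have hH := hf.hausdorffMeasure_image_le (Nat.cast_nonneg (Module.finrank ℝ E)) s
  rw [ENNReal.rpow_natCast] at hH
  rw [hμ, Measure.smul_apply, Measure.smul_apply, ENNReal.smul_def, ENNReal.smul_def, smul_eq_mul,
    smul_eq_mul, mul_left_comm]
  gcongr

def measurableEquivProd : EucSp 2 ≃ᵐ ℝ × ℝ :=
  (MeasurableEquiv.toLp 2 (Fin 2 → ℝ)).symm.trans MeasurableEquiv.finTwoArrow

lemma measurePreserving_measurableEquivProd_symm : MeasurePreserving measurableEquivProd.symm :=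
  ((volume_preserving_finTwoArrow ℝ).comp
    (EuclideanSpace.volume_preserving_symm_measurableEquiv_toLp (Fin 2))).symm _

lemma volume_le_of_horizontal_slices {E : Set (EucSp 2)} (hE : MeasurableSet E) {a : ℝ}
    {I : Set ℝ} (hI : MeasurableSet I) (hEI : ∀ p ∈ E, p 1 ∈ I)
    (hslice : ∀ p ∈ E, ∀ q ∈ E, p 1 = q 1 → dist p q ≤ a) :
    volume E ≤ ENNReal.ofReal a * volume I := by
  set B := measurableEquivProd.symm ⁻¹' E
  have hsection : ∀ y,
      volume ((fun s => (s, y)) ⁻¹' B) ≤ I.indicator (fun _ => ENNReal.ofReal a) y := by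
    intro y
    by_cases hy : y ∈ I
    · rw [indicator_of_mem hy]
      refine (Real.volume_le_diam _).trans (ediam_le_of_forall_dist_le fun s hs t ht => ?_)
      exact (PiLp.dist_apply_le _ _ 0).trans (hslice _ hs _ ht rfl)
    · have : (fun s => (s, y)) ⁻¹' B = ∅ := eq_empty_of_forall_notMem fun s hs => hy (hEI _ hs)
      simp [this]
  calc volume E = volume B :=
        (measurePreserving_measurableEquivProd_symm.measure_preimage hE.nullMeasurableSet).symm
    _ = ∫⁻ y, volume ((fun s => (s, y)) ⁻¹' B) := by
        rw [Measure.volume_eq_prod,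
          Measure.prod_apply_symm (measurableEquivProd.symm.measurable hE)]
    _ ≤ ∫⁻ y, I.indicator (fun _ => ENNReal.ofReal a) y := lintegral_mono hsection
    _ = ENNReal.ofReal a * volume I := lintegral_indicator_const hI _

theorem volume_le_of_biLipschitz_of_slices {Λ δ D : ℝ} (hΛ : 0 < Λ) {K : Set (EucSp 2)}
    (hK : MeasurableSet K) (hKD : ∀ a ∈ K, ∀ b ∈ K, dist a b ≤ D) {G Ginv : EucSp 2 → EucSp 2}
    (hGinvG : ∀ x, Ginv (G x) = x) (hGGinv : ∀ x, G (Ginv x) = x)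
    (hbil : ∀ x y, Λ⁻¹ * dist x y ≤ dist (G x) (G y) ∧ dist (G x) (G y) ≤ Λ * dist x y)
    {f : EucSp 2 → ℝ} (hf : ∀ x y, dist (f x) (f y) ≤ δ)
    (hslice : ∀ p ∈ G '' K, ∀ q ∈ G '' K, p 1 = q 1 →
      Λ⁻¹ * dist p q ≤ dist (f (Ginv p)) (f (Ginv q))) :
    volume K ≤ ENNReal.ofReal (2 * Λ ^ 4 * δ * D) := by
  rcases K.eq_empty_or_nonempty with rfl | ⟨k₀, hk₀⟩
  · simp
  have hδ : 0 ≤ δ := dist_nonneg.trans (hf k₀ k₀)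
  have hGinv : LipschitzWith (Real.toNNReal Λ) Ginv := LipschitzWith.of_dist_le_mul fun p q => by
    have := (hbil (Ginv p) (Ginv q)).1
    rwa [hGGinv, hGGinv, inv_mul_le_iff₀ hΛ, ← Real.coe_toNNReal _ hΛ.le] at this
  have hGK : G '' K = Ginv ⁻¹' K := congrFun (image_eq_preimage_of_inverse hGinvG hGGinv) K
  have hstrip : ∀ p ∈ G '' K, p 1 ∈ Icc (G k₀ 1 - Λ * D) (G k₀ 1 + Λ * D) := by
    rintro _ ⟨a, ha, rfl⟩
    have := (PiLp.dist_apply_le (G a) (G k₀) 1).trans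
      ((hbil a k₀).2.trans (mul_le_mul_of_nonneg_left (hKD a ha k₀ hk₀) hΛ.le))
    rw [Real.dist_eq, abs_sub_le_iff] at this
    constructor <;> linarith [this.1, this.2]
  have hdiam : ∀ p ∈ G '' K, ∀ q ∈ G '' K, p 1 = q 1 → dist p q ≤ Λ * δ := fun p hp q hq hpq => by
    have := (hslice p hp q hq hpq).trans (hf _ _)
    rwa [inv_mul_le_iff₀ hΛ] at this
  calc volume K = volume (Ginv '' (G '' K)) := by simp [image_image, hGinvG]
    _ ≤ ENNReal.ofReal Λ ^ 2 * volume (G '' K) := by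
        have := hGinv.addHaar_image_le volume (G '' K)
        rwa [finrank_euclideanSpace_fin] at this
    _ ≤ ENNReal.ofReal Λ ^ 2 *
          (ENNReal.ofReal (Λ * δ) * volume (Icc (G k₀ 1 - Λ * D) (G k₀ 1 + Λ * D))) := by
        gcongr
        exact volume_le_of_horizontal_slices (hGK ▸ hGinv.continuous.measurable hK)
          measurableSet_Icc hstrip hdiam
    _ = ENNReal.ofReal (2 * Λ ^ 4 * δ * D) := by
        rw [Real.volume_Icc, ← ENNReal.ofReal_pow hΛ.le, ← ENNReal.ofReal_mul (by positivity),
          ← ENNReal.ofReal_mul (by positivity)]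
        ring_nf

lemma dist_le_two_of_mem_unitSquare {a b : EucSp 2} (ha : a ∈ unitSquare) (hb : b ∈ unitSquare) :
    dist a b ≤ 2 := by
  rw [EuclideanSpace.dist_eq, Real.sqrt_le_left zero_le_two, Fin.sum_univ_two]
  have h₀ := Real.dist_le_of_mem_Icc_01 (ha 0) (hb 0)
  have h₁ := Real.dist_le_of_mem_Icc_01 (ha 1) (hb 1)
  nlinarith [dist_nonneg (x := a 0) (y := b 0), dist_nonneg (x := a 1) (y := b 1)]

/-- Proposition fold: fix `Λ > 1`. For every `ε > 0` there is a
Lipschitz map `f : [0,1]² → ℝ` with `Θ^{*1}(f,x) = Θ_*^1(f,x) = |J^1 f|(x) = 1` a.e.,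
such that for every measurable `K ⊆ [0,1]²` and every `Λ`-bi-Lipschitz homeomorphism
`G : ℝ² → ℝ²` for which `f ∘ G⁻¹` restricted to `(ℝ × {y}) ∩ G(K)` is `Λ`-bi-Lipschitz
for every `y ∈ ℝ`, one has `ℋ²(K) < ε`. -/
theorem stmt14 (Λ : ℝ) (hΛ : 1 < Λ) (ε : ℝ) (hε : 0 < ε) :
    ∃ f : EucSp 2 → ℝ,
      (∃ L : ℝ≥0, LipschitzOnWith L f unitSquare) ∧
      (∀ᵐ x ∂(volume.restrict unitSquare),
        upperDensity 1 f unitSquare x = 1 ∧ lowerDensity 1 f unitSquare x = 1 ∧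
        ∃ D : Matrix (Fin 1) (Fin 2) ℝ,
          HasApproxDerivWithinAt unitSquare f (matrixRow D 0) x ∧ jacDet D = 1) ∧
      ∀ (K : Set (EucSp 2)), K ⊆ unitSquare → MeasurableSet K →
      ∀ (G Ginv : EucSp 2 → EucSp 2),
        (∀ x, Ginv (G x) = x) → (∀ x, G (Ginv x) = x) →
        (∀ x y, Λ⁻¹ * dist x y ≤ dist (G x) (G y) ∧ dist (G x) (G y) ≤ Λ * dist x y) →
        (∀ y : ℝ, ∀ p ∈ {q : EucSp 2 | q 1 = y} ∩ G '' K,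
          ∀ q ∈ {q : EucSp 2 | q 1 = y} ∩ G '' K,
            Λ⁻¹ * dist p q ≤ dist (f (Ginv p)) (f (Ginv q)) ∧
              dist (f (Ginv p)) (f (Ginv q)) ≤ Λ * dist p q) →
        volume K < ENNReal.ofReal ε := by
  have hΛ₀ : 0 < Λ := zero_lt_one.trans hΛ
  set d := ε / (4 * Λ ^ 4)
  have hd : 0 < d := by positivity
  have hlattice : volume (range fun k : ℤ => d / 2 * k) = 0 := (countable_range _).measure_zero _
  refine ⟨fun y => sawtooth d (y 0),
    ⟨_, ((lipschitzWith_sawtooth d).comp (lipschitzWith_apply (ι := Fin 2) 0)).lipschitzOnWith⟩,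
    ?_, ?_⟩
  · filter_upwards [ae_restrict_mem_nhds_of_convex volume convex_unitSquare,
      ae_restrict_of_ae (ae_apply_notMem 0 hlattice)] with x hA hx
    obtain ⟨σ, c, hσ, hg⟩ := sawtooth_eventuallyEq_affine hd fun k hk => hx ⟨k, hk.symm⟩
    obtain ⟨hupper, hlower⟩ := upperDensity_eq_one_and_lowerDensity_eq_one hA hσ hg
    refine ⟨hupper, hlower, !![σ, 0], hasApproxDerivWithinAt_comp_apply_zero hA hg, ?_⟩
    rw [jacDet_row, ← sq_abs, hσ]
    norm_num
  · intro K hKsub hK G Ginv hGinvG hGGinv hbil hcurve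
    calc volume K ≤ ENNReal.ofReal (2 * Λ ^ 4 * (d / 2) * 2) :=
          volume_le_of_biLipschitz_of_slices (f := fun y => sawtooth d (y 0)) hΛ₀ hK
            (fun a ha b hb => dist_le_two_of_mem_unitSquare (hKsub ha) (hKsub hb)) hGinvG hGGinv
            hbil (fun x y => dist_sawtooth_le hd _ _)
            fun p hp q hq hpq => (hcurve (q 1) p ⟨hpq, hp⟩ q ⟨rfl, hq⟩).1
      _ < ENNReal.ofReal ε := by
        rw [ENNReal.ofReal_lt_ofReal_iff hε]
        have : 2 * Λ ^ 4 * (d / 2) * 2 = ε / 2 := by simp only [d]; field_simp; ring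
        linarith

end
end

section
/- Let D ⊂ ℝ^k be a cube or a ball and f : D → ℓ^∞ an L-Lipschitz map. Let A = {x ∈ D : Df(x) = 0}, where Df denotes the component-wise derivative of f (defined at almost every point). Then there is a constant C(k) depending only on k such that diam(f(D)) ≤ C(k) · L · ℋ^k(D \ A)^{1/k}. -/
/-
Let `T ⊇ D \ A` be measurable with the same volume. On a segment `[p, z] ⊆ D` every component
`fᵢ` is `L`-Lipschitz with zero derivative off `T`, so the fundamental theorem of calculus for
absolutely continuous functions gives `|fᵢ z - fᵢ p| ≤ L · ℋ¹([p, z] ∩ T)`. Average this over `z`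
in a ball `B ⊆ D` whose radius is comparable to `diam D`: Tonelli in `(s, z)`, the substitution
`w = p + s (z - p)` and Tonelli back bound the mean of `ℋ¹([p, z] ∩ T)` by a multiple of the Riesz
potential `∫_T |w - p|^(1 - k) dw`. Splitting that integral at radius `|T|^(1/k)` around `p`
(polar coordinates inside, the trivial bound outside) gives `C |T|^(1/k)`. For `x, y ∈ D` pick
`z ∈ B` below the mean for both `x` and `y` and go from `x` to `y` through `z`.
-/

open MeasureTheory Metric Set Filter
open scoped ENNReal NNReal Topology

noncomputable section

open Module

theorem edist_le_mul_volume_of_hasDerivWithinAt_zero {φ : ℝ → ℝ} {Λ : ℝ≥0} {a b : ℝ}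
    (hab : a ≤ b) (hφ : LipschitzOnWith Λ φ (Icc a b)) {W : Set ℝ}
    (hW : ∀ t ∈ Icc a b \ W, HasDerivWithinAt φ 0 (Icc a b) t) :
    edist (φ b) (φ a) ≤ Λ * volume (W ∩ Ioc a b) := by
  have hderiv : ∀ᵐ t ∂volume.restrict (Ioc a b),
      ‖deriv φ t‖ₑ ≤ W.indicator (fun _ => (Λ : ℝ≥0∞)) t := by
    rw [← Measure.restrict_congr_set Ioo_ae_eq_Ioc]
    filter_upwards [ae_restrict_mem measurableSet_Ioo] with t ht
    by_cases htW : t ∈ W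
    · rw [indicator_of_mem htW, ← ofReal_norm, ← ENNReal.ofReal_coe_nnreal]
      exact ENNReal.ofReal_le_ofReal (norm_deriv_le_of_lipschitzOn (Icc_mem_nhds ht.1 ht.2) hφ)
    · rw [((hW t ⟨Ioo_subset_Icc_self ht, htW⟩).hasDerivAt (Icc_mem_nhds ht.1 ht.2)).deriv]
      simp
  calc edist (φ b) (φ a) = ‖∫ t in a..b, deriv φ t‖ₑ := by
        rw [(hφ.mono (uIcc_of_le hab).subset).absolutelyContinuousOnInterval.integral_deriv_eq_sub,
          edist_eq_enorm_sub]
    _ ≤ ∫⁻ t in Ioc a b, ‖deriv φ t‖ₑ := by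
        rw [intervalIntegral.integral_of_le hab]; exact enorm_integral_le_lintegral_enorm _
    _ ≤ ∫⁻ t in Ioc a b, W.indicator (fun _ => (Λ : ℝ≥0∞)) t := lintegral_mono_ae hderiv
    _ ≤ Λ * volume (W ∩ Ioc a b) := by
        grw [lintegral_indicator_const_le, Measure.restrict_apply' measurableSet_Ioc]

theorem lintegral_Ioi_rpow_neg_add_one {p a : ℝ} (hp : 0 < p) (ha : 0 < a) :
    ∫⁻ s in Ioi a, ENNReal.ofReal (s ^ (-(p + 1))) = ENNReal.ofReal (a ^ (-p) / p) := by
  have hlt : -(p + 1) < -1 := by linarith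
  have hnonneg : 0 ≤ᵐ[volume.restrict (Ioi a)] fun s => s ^ (-(p + 1)) :=
    (ae_restrict_iff' measurableSet_Ioi).2 (.of_forall fun s hs => by
      exact Real.rpow_nonneg (ha.trans hs).le _)
  rw [← ofReal_integral_eq_lintegral_ofReal (integrableOn_Ioi_rpow_of_lt hlt ha) hnonneg,
    integral_Ioi_rpow_of_lt hlt ha, show -(p + 1) + 1 = -p by ring, neg_div_neg_eq]

theorem lintegral_Ioc_rpow_neg_mul_indicator_le {p : ℝ} (hp : 0 < p) (t : ℝ) {M : ℝ}
    (hM : 0 < M) :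
    ∫⁻ s in Ioc 0 1, ENNReal.ofReal (s ^ (-(p + 1))) *
        {s | t ≤ s * M}.indicator (fun _ => ENNReal.ofReal t) s
      ≤ ENNReal.ofReal (M ^ p / p * t ^ (1 - p)) := by
  rcases le_or_gt t 0 with ht | ht
  · simp [ENNReal.ofReal_of_nonpos ht, indicator]
  have hset : {s | t ≤ s * M} = Ici (t / M) := by ext s; simp [div_le_iff₀ hM]
  calc _ ≤ ∫⁻ s, (Ici (t / M)).indicator
          (fun s => ENNReal.ofReal (s ^ (-(p + 1))) * ENNReal.ofReal t) s := by
        refine (setLIntegral_le_lintegral _ _).trans (lintegral_mono fun s => ?_)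
        rw [hset]; by_cases hs : s ∈ Ici (t / M) <;> simp [hs]
    _ = (∫⁻ s in Ioi (t / M), ENNReal.ofReal (s ^ (-(p + 1)))) * ENNReal.ofReal t := by
        rw [lintegral_indicator measurableSet_Ici, ← Measure.restrict_congr_set Ioi_ae_eq_Ici,
          lintegral_mul_const' _ _ ENNReal.ofReal_ne_top]
    _ = ENNReal.ofReal (M ^ p / p * t ^ (1 - p)) := by
        rw [lintegral_Ioi_rpow_neg_add_one hp (by positivity),
          ← ENNReal.ofReal_mul (by positivity)]
        congr 1
        rw [Real.div_rpow ht.le hM.le, Real.rpow_neg ht.le, Real.rpow_neg hM.le,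
          Real.rpow_sub ht, Real.rpow_one]
        field_simp

theorem lp.edist_le_of_forall_le {ι : Type*} {a b : lp (fun _ : ι => ℝ) ∞} {C : ℝ≥0∞}
    (h : ∀ i, edist (a i) (b i) ≤ C) : edist a b ≤ C := by
  rcases eq_or_ne C ⊤ with rfl | hC
  · exact le_top
  rw [edist_dist, dist_eq_norm]
  refine ENNReal.ofReal_le_of_le_toReal
    (lp.norm_le_of_forall_le ENNReal.toReal_nonneg fun i => ?_)
  rw [lp.coeFn_sub, Pi.sub_apply, ← dist_eq_norm, dist_edist]
  exact ENNReal.toReal_mono hC (h i)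

theorem setLIntegral_diff_ball_norm_sub_rpow_le {E : Type*} [NormedAddCommGroup E]
    [MeasurableSpace E] (μ : Measure E) (x : E) (S : Set E) {ρ q : ℝ} (hρ : 0 < ρ)
    (hq : q ≤ 0) :
    ∫⁻ w in S \ ball x ρ, ENNReal.ofReal (‖w - x‖ ^ q) ∂μ ≤ ENNReal.ofReal (ρ ^ q) * μ S := by
  calc ∫⁻ w in S \ ball x ρ, ENNReal.ofReal (‖w - x‖ ^ q) ∂μ
      ≤ ∫⁻ _ in S \ ball x ρ, ENNReal.ofReal (ρ ^ q) ∂μ := by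
        refine setLIntegral_mono measurable_const fun w hw => ENNReal.ofReal_le_ofReal ?_
        have hw : ρ ≤ ‖w - x‖ := by simpa [dist_eq_norm] using hw.2
        exact Real.rpow_le_rpow_of_nonpos hρ hw hq
    _ ≤ ENNReal.ofReal (ρ ^ q) * μ S := by
        rw [setLIntegral_const]; gcongr; exact sdiff_subset

section Segment

variable {E : Type*} [NormedAddCommGroup E] [NormedSpace ℝ E]

/-- The length `ℋ¹([x, z] ∩ S)`. -/
noncomputable def segmentLength (S : Set E) (x z : E) : ℝ≥0∞ :=
  volume ({s : ℝ | x + s • (z - x) ∈ S} ∩ Ioc 0 1) * ‖z - x‖ₑ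

theorem edist_le_mul_segmentLength {D S : Set E} (hD : Convex ℝ D) {g : E → ℝ} {L : ℝ≥0}
    (hg : LipschitzOnWith L g D) (hS : ∀ y ∈ D \ S, HasFDerivWithinAt g (0 : E →L[ℝ] ℝ) D y)
    {p z : E} (hp : p ∈ D) (hz : z ∈ D) :
    edist (g z) (g p) ≤ L * segmentLength S p z := by
  set γ : ℝ → E := fun s => p + s • (z - p)
  have hγD : MapsTo γ (Icc 0 1) D := fun s hs => hD.add_smul_sub_mem hp hz hs
  have hγ : LipschitzWith ‖z - p‖₊ γ := LipschitzWith.of_dist_le_mul fun s t => by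
    simp only [γ, dist_eq_norm, add_sub_add_left_eq_sub, ← sub_smul, norm_smul, Real.norm_eq_abs,
      coe_nnnorm, mul_comm]
    rfl
  have hderiv : ∀ t ∈ Icc (0 : ℝ) 1 \ {s | γ s ∈ S}, HasDerivWithinAt (g ∘ γ) 0 (Icc 0 1) t := by
    intro t ht
    have hγ' : HasDerivWithinAt γ (z - p) (Icc 0 1) t := by
      simpa only [id, one_smul] using
        ((hasDerivWithinAt_id t (Icc (0 : ℝ) 1)).smul_const (z - p)).const_add p
    simpa using (hS (γ t) ⟨hγD ht.1, ht.2⟩).comp_hasDerivWithinAt t hγ' hγD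
  have h1D := edist_le_mul_volume_of_hasDerivWithinAt_zero zero_le_one
    (hg.comp hγ.lipschitzOnWith hγD) hderiv
  simp only [Function.comp_apply, γ, zero_smul, add_zero, one_smul, add_sub_cancel] at h1D
  calc edist (g z) (g p)
      ≤ ↑(L * ‖z - p‖₊) * volume ({s : ℝ | p + s • (z - p) ∈ S} ∩ Ioc 0 1) := h1D
    _ = L * segmentLength S p z := by
        rw [segmentLength, ENNReal.coe_mul, enorm_eq_nnnorm]; ring

variable [MeasurableSpace E] [BorelSpace E]

theorem segmentLength_eq_lintegral {S : Set E} (hS : MeasurableSet S) (x z : E) :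
    segmentLength S x z = ∫⁻ s in Ioc (0 : ℝ) 1, S.indicator 1 (x + s • (z - x)) * ‖z - x‖ₑ := by
  have hpre : MeasurableSet {s : ℝ | x + s • (z - x) ∈ S} :=
    (by fun_prop : Measurable fun s : ℝ => x + s • (z - x)) hS
  have hmeas : Measurable fun s : ℝ => S.indicator (1 : E → ℝ≥0∞) (x + s • (z - x)) :=
    (measurable_one.indicator hS).comp (by fun_prop)
  rw [lintegral_mul_const _ hmeas, segmentLength, ← Measure.restrict_apply hpre,
    ← lintegral_indicator_one hpre]
  rfl

theorem measurable_segmentLength {S : Set E} (hS : MeasurableSet S) (x : E) :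
    Measurable (segmentLength S x) := by
  simp_rw [funext (segmentLength_eq_lintegral hS x)]
  exact Measurable.lintegral_prod_right (by fun_prop)

variable [FiniteDimensional ℝ E] (μ : Measure E) [μ.IsAddHaarMeasure]

theorem lintegral_comp_homothety {g : E → ℝ≥0∞} (hg : Measurable g) (x : E) {s : ℝ}
    (hs : s ≠ 0) :
    ∫⁻ z, g (x + s • (z - x)) ∂μ = ENNReal.ofReal |(s ^ finrank ℝ E)⁻¹| * ∫⁻ w, g w ∂μ := by
  have hT : (fun z => x + s • (z - x)) = (fun w => (x - s • x) + w) ∘ (fun z : E => s • z) := by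
    funext z; simp only [Function.comp_apply, smul_sub]; abel
  have hmap : Measure.map (fun z => x + s • (z - x)) μ
      = ENNReal.ofReal |(s ^ finrank ℝ E)⁻¹| • μ := by
    rw [hT, ← Measure.map_map (measurable_const_add _) (measurable_const_smul s),
      Measure.map_addHaar_smul μ hs, Measure.map_smul, map_add_left_eq_self]
  rw [← lintegral_map hg (by fun_prop), hmap, lintegral_smul_measure, smul_eq_mul]

theorem lintegral_closedBall_indicator_homothety {S : Set E} (hS : MeasurableSet S) (x : E)
    (M : ℝ) {s : ℝ} (hs : 0 < s) :
    ∫⁻ z in closedBall x M, S.indicator 1 (x + s • (z - x)) * ‖z - x‖ₑ ∂μ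
      = ENNReal.ofReal (s ^ (-(finrank ℝ E + 1 : ℝ))) *
          ∫⁻ w in S ∩ closedBall x (s * M), ‖w - x‖ₑ ∂μ := by
  set g : E → ℝ≥0∞ := (S ∩ closedBall x (s * M)).indicator fun w => ‖w - x‖ₑ
  have hg : Measurable g := (by fun_prop : Measurable fun w : E => ‖w - x‖ₑ).indicator
    (hS.inter measurableSet_closedBall)
  have hpt : ∀ z,
      (closedBall x M).indicator (fun z => S.indicator 1 (x + s • (z - x)) * ‖z - x‖ₑ) z
        = ENNReal.ofReal s⁻¹ * g (x + s • (z - x)) := by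
    intro z
    have hnorm : ‖x + s • (z - x) - x‖ = s * ‖z - x‖ := by
      rw [add_sub_cancel_left, norm_smul, Real.norm_of_nonneg hs.le]
    have hball : x + s • (z - x) ∈ closedBall x (s * M) ↔ z ∈ closedBall x M := by
      simp only [mem_closedBall, dist_eq_norm, hnorm, mul_le_mul_iff_of_pos_left hs]
    have hunscale : ENNReal.ofReal s⁻¹ * ‖x + s • (z - x) - x‖ₑ = ‖z - x‖ₑ := by
      rw [← ofReal_norm, ← ofReal_norm, hnorm, ← ENNReal.ofReal_mul (by positivity),
        inv_mul_cancel_left₀ hs.ne']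
    simp only [g]
    by_cases hz : z ∈ closedBall x M
    · by_cases hT : x + s • (z - x) ∈ S
      · rw [indicator_of_mem hz, indicator_of_mem hT,
          indicator_of_mem (show _ ∈ S ∩ _ from ⟨hT, hball.2 hz⟩), Pi.one_apply, one_mul,
          hunscale]
      · rw [indicator_of_mem hz, indicator_of_notMem hT, indicator_of_notMem fun h => hT h.1,
          zero_mul, mul_zero]
    · rw [indicator_of_notMem hz, indicator_of_notMem fun h => hz (hball.1 h.2), mul_zero]
  rw [← lintegral_indicator measurableSet_closedBall, lintegral_congr hpt,
    lintegral_const_mul' _ _ ENNReal.ofReal_ne_top, lintegral_comp_homothety μ hg x hs.ne',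
    lintegral_indicator (hS.inter measurableSet_closedBall), ← mul_assoc,
    ← ENNReal.ofReal_mul (by positivity), abs_of_pos (by positivity), Real.rpow_neg hs.le,
    Real.rpow_add hs, Real.rpow_natCast, Real.rpow_one, mul_inv, mul_comm s⁻¹]

variable [Nontrivial E]

theorem setLIntegral_ball_norm_sub_rpow (x : E) {ρ : ℝ} (hρ : 0 ≤ ρ) :
    ∫⁻ w in ball x ρ, ENNReal.ofReal (‖w - x‖ ^ (1 - (finrank ℝ E : ℝ))) ∂μ
      = ENNReal.ofReal (finrank ℝ E * ρ) * μ (ball 0 1) := by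
  set n := finrank ℝ E
  set F : ℝ → ℝ := (Iio ρ).indicator fun r => r ^ (1 - (n : ℝ))
  have hF : ∀ r, 0 < r → r ^ (n - 1) • F r = (Iio ρ).indicator 1 r := by
    intro r hr
    by_cases hrρ : r < ρ
    · have hn : 1 ≤ n := finrank_pos
      simp only [F, indicator_of_mem (show r ∈ Iio ρ from hrρ), smul_eq_mul, Pi.one_apply]
      rw [← Real.rpow_natCast, Nat.cast_sub hn, ← Real.rpow_add hr]
      simp
    · simp [F, hrρ]
  have hindicator : IntegrableOn ((Iio ρ).indicator (1 : ℝ → ℝ)) (Ioi 0) := by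
    rw [IntegrableOn, integrable_indicator_iff measurableSet_Iio]
    refine integrableOn_const ?_
    rw [Measure.restrict_apply measurableSet_Iio, Iio_inter_Ioi, Real.volume_Ioo]
    exact ENNReal.ofReal_ne_top
  have hint : Integrable (fun w : E => F ‖w‖) μ :=
    (integrable_fun_norm_addHaar μ).2
      (hindicator.congr_fun (fun r hr => (hF r hr).symm) measurableSet_Ioi)
  calc ∫⁻ w in ball x ρ, ENNReal.ofReal (‖w - x‖ ^ (1 - (n : ℝ))) ∂μ
      = ∫⁻ w, ENNReal.ofReal (F ‖w - x‖) ∂μ := by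
        rw [← lintegral_indicator measurableSet_ball]
        congr 1; ext w
        simp only [F, indicator, mem_ball, dist_eq_norm, mem_Iio]
        split_ifs <;> simp
    _ = ∫⁻ w, ENNReal.ofReal (F ‖w‖) ∂μ :=
        lintegral_sub_right_eq_self (fun w => ENNReal.ofReal (F ‖w‖)) x
    _ = ENNReal.ofReal (∫ w, F ‖w‖ ∂μ) := by
        rw [ofReal_integral_eq_lintegral_ofReal hint]
        exact .of_forall fun w =>
          indicator_nonneg (fun r _ => Real.rpow_nonneg (norm_nonneg w) _) _
    _ = ENNReal.ofReal (n * ρ) * μ (ball 0 1) := by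
        rw [integral_fun_norm_addHaar, setIntegral_congr_fun measurableSet_Ioi hF,
          integral_indicator_one measurableSet_Iio, measureReal_restrict_apply measurableSet_Iio,
          Iio_inter_Ioi, Real.volume_real_Ioo_of_le hρ, sub_zero, nsmul_eq_mul, smul_eq_mul,
          ← mul_assoc, mul_right_comm, ENNReal.ofReal_mul (by positivity), Measure.real,
          ENNReal.ofReal_toReal measure_ball_lt_top.ne]

theorem setLIntegral_norm_sub_rpow_le (x : E) (S : Set E) :
    ∫⁻ w in S, ENNReal.ofReal (‖w - x‖ ^ (1 - (finrank ℝ E : ℝ))) ∂μ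
      ≤ (finrank ℝ E * μ (ball 0 1) + 1) * μ S ^ ((finrank ℝ E : ℝ)⁻¹) := by
  set n := finrank ℝ E
  have hn : n ≠ 0 := finrank_pos.ne'
  rcases eq_or_ne (μ S) 0 with hS0 | hS0
  · simp [setLIntegral_measure_zero _ _ hS0]
  rcases eq_or_ne (μ S) ⊤ with hStop | hStop
  · rw [hStop, ENNReal.top_rpow_of_pos (by positivity), ENNReal.mul_top (by positivity)]
    exact le_top
  set ρ := (μ S).toReal ^ ((n : ℝ)⁻¹)
  have hρ : 0 < ρ := Real.rpow_pos_of_pos (ENNReal.toReal_pos hS0 hStop) _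
  have hμS : μ S = ENNReal.ofReal (ρ ^ n) := by
    rw [Real.rpow_inv_natCast_pow ENNReal.toReal_nonneg hn, ENNReal.ofReal_toReal hStop]
  have hρS : ENNReal.ofReal ρ = μ S ^ ((n : ℝ)⁻¹) := by
    rw [← ENNReal.ofReal_toReal hStop,
      ENNReal.ofReal_rpow_of_nonneg ENNReal.toReal_nonneg (by positivity)]
  have hfar : ENNReal.ofReal (ρ ^ (1 - (n : ℝ))) * μ S = ENNReal.ofReal ρ := by
    rw [hμS, ← ENNReal.ofReal_mul (by positivity), ← Real.rpow_natCast, ← Real.rpow_add hρ,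
      sub_add_cancel, Real.rpow_one]
  calc ∫⁻ w in S, ENNReal.ofReal (‖w - x‖ ^ (1 - (n : ℝ))) ∂μ
      = ∫⁻ w in S ∩ ball x ρ, ENNReal.ofReal (‖w - x‖ ^ (1 - (n : ℝ))) ∂μ
        + ∫⁻ w in S \ ball x ρ, ENNReal.ofReal (‖w - x‖ ^ (1 - (n : ℝ))) ∂μ :=
        (lintegral_inter_add_sdiff _ S measurableSet_ball).symm
    _ ≤ ENNReal.ofReal (n * ρ) * μ (ball 0 1) + ENNReal.ofReal (ρ ^ (1 - (n : ℝ))) * μ S := by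
        gcongr
        · exact (lintegral_mono_set inter_subset_right).trans_eq
            (setLIntegral_ball_norm_sub_rpow μ x hρ.le)
        · exact setLIntegral_diff_ball_norm_sub_rpow_le μ x S hρ
            (sub_nonpos.2 (Nat.one_le_cast.2 finrank_pos))
    _ = (n * μ (ball 0 1) + 1) * μ S ^ ((n : ℝ)⁻¹) := by
        rw [hfar, ENNReal.ofReal_mul (Nat.cast_nonneg _), ENNReal.ofReal_natCast, hρS]
        ring

theorem lintegral_closedBall_segmentLength_le {S : Set E} (hS : MeasurableSet S) (x : E)
    {M : ℝ} (hM : 0 < M) :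
    ∫⁻ z in closedBall x M, segmentLength S x z ∂μ
      ≤ ENNReal.ofReal (M ^ finrank ℝ E / finrank ℝ E) *
          ∫⁻ w in S, ENNReal.ofReal (‖w - x‖ ^ (1 - (finrank ℝ E : ℝ))) ∂μ := by
  set n := finrank ℝ E
  set ψ : ℝ → ℝ≥0∞ := fun s => ENNReal.ofReal (s ^ (-(n + 1 : ℝ)))
  -- `ψ s * K (s, w)` is the integrand after the substitution `w = x + s (z - x)`.
  set K : ℝ × E → ℝ≥0∞ := fun q => (S ∩ closedBall x (q.1 * M)).indicator (‖· - x‖ₑ) q.2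
  have hK : Measurable K := by
    have hP : MeasurableSet {q : ℝ × E | q.2 ∈ S ∧ dist q.2 x ≤ q.1 * M} :=
      (measurable_snd hS).inter (measurableSet_le (f := fun q : ℝ × E => dist q.2 x)
        (g := fun q => q.1 * M) (by fun_prop) (by fun_prop))
    exact (by fun_prop : Measurable fun q : ℝ × E => ‖q.2 - x‖ₑ).indicator hP
  have hinner : ∀ w, ∫⁻ s in Ioc (0 : ℝ) 1, ψ s * K (s, w)
      ≤ S.indicator (fun w => ENNReal.ofReal (M ^ n / n * ‖w - x‖ ^ (1 - (n : ℝ)))) w := by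
    intro w
    by_cases hw : w ∈ S
    · rw [indicator_of_mem hw]
      refine le_trans (le_of_eq ?_) ((lintegral_Ioc_rpow_neg_mul_indicator_le
        (Nat.cast_pos.2 finrank_pos) ‖w - x‖ hM).trans_eq (by rw [Real.rpow_natCast]))
      refine setLIntegral_congr_fun measurableSet_Ioc fun s _ => ?_
      simp [K, ψ, n, hw, indicator, ofReal_norm, dist_eq_norm]
    · simp [K, hw]
  calc ∫⁻ z in closedBall x M, segmentLength S x z ∂μ
      = ∫⁻ s in Ioc (0 : ℝ) 1,
          ∫⁻ z in closedBall x M, S.indicator 1 (x + s • (z - x)) * ‖z - x‖ₑ ∂μ := by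
        simp_rw [segmentLength_eq_lintegral hS]
        exact lintegral_lintegral_swap (by fun_prop)
    _ = ∫⁻ s in Ioc (0 : ℝ) 1, ψ s * ∫⁻ w, K (s, w) ∂μ := by
        refine setLIntegral_congr_fun measurableSet_Ioc fun s hs => ?_
        rw [lintegral_closedBall_indicator_homothety μ hS x M hs.1,
          ← lintegral_indicator (hS.inter measurableSet_closedBall)]
    _ = ∫⁻ w, (∫⁻ s in Ioc (0 : ℝ) 1, ψ s * K (s, w)) ∂μ := by
        rw [← lintegral_lintegral_swap (by fun_prop)]
        exact setLIntegral_congr_fun measurableSet_Ioc fun s _ =>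
          (lintegral_const_mul (ψ s) (hK.comp measurable_prodMk_left)).symm
    _ ≤ ∫⁻ w, S.indicator (fun w => ENNReal.ofReal (M ^ n / n * ‖w - x‖ ^ (1 - (n : ℝ)))) w ∂μ :=
        lintegral_mono hinner
    _ = ENNReal.ofReal (M ^ n / n) *
          ∫⁻ w in S, ENNReal.ofReal (‖w - x‖ ^ (1 - (n : ℝ))) ∂μ := by
        rw [lintegral_indicator hS, ← lintegral_const_mul' _ _ ENNReal.ofReal_ne_top]
        refine setLIntegral_congr_fun hS fun w _ => ?_
        rw [ENNReal.ofReal_mul (by positivity)]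

theorem setLAverage_segmentLength_le {S : Set E} (hS : MeasurableSet S) {c x : E} {ρ R : ℝ}
    (hρ : 0 < ρ) (hx : x ∈ closedBall c (R * ρ)) :
    ⨍⁻ z in closedBall c ρ, segmentLength S x z ∂μ
      ≤ ENNReal.ofReal ((R + 1) ^ finrank ℝ E / finrank ℝ E) *
          (finrank ℝ E * μ (ball 0 1) + 1) / μ (ball 0 1) * μ S ^ ((finrank ℝ E : ℝ)⁻¹) := by
  set n := finrank ℝ E
  set ω := μ (ball 0 1)
  have hR : 0 ≤ R := nonneg_of_mul_nonneg_left (dist_nonneg.trans hx) hρ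
  have hsub : closedBall c ρ ⊆ closedBall x ((R + 1) * ρ) := by
    refine closedBall_subset_closedBall' ?_
    rw [dist_comm]; linarith [mem_closedBall.1 hx]
  have hρn : ENNReal.ofReal (ρ ^ n) ≠ 0 := by simp [hρ]
  calc ⨍⁻ z in closedBall c ρ, segmentLength S x z ∂μ
      ≤ (∫⁻ z in closedBall x ((R + 1) * ρ), segmentLength S x z ∂μ) / μ (closedBall c ρ) := by
        rw [setLAverage_eq]; gcongr
    _ ≤ ENNReal.ofReal (((R + 1) * ρ) ^ n / n) * ((n * ω + 1) * μ S ^ ((n : ℝ)⁻¹))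
          / (ENNReal.ofReal (ρ ^ n) * ω) := by
        rw [Measure.addHaar_closedBall μ c hρ.le]
        gcongr
        exact (lintegral_closedBall_segmentLength_le μ hS x (by positivity)).trans
          (by gcongr; exact setLIntegral_norm_sub_rpow_le μ x S)
    _ = ENNReal.ofReal ((R + 1) ^ n / n) * (n * ω + 1) / ω * μ S ^ ((n : ℝ)⁻¹) := by
        rw [mul_pow, mul_div_right_comm, ENNReal.ofReal_mul (by positivity), mul_assoc,
          mul_left_comm, ENNReal.mul_div_mul_left _ _ hρn ENNReal.ofReal_ne_top]
        simp only [div_eq_mul_inv]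
        ring

theorem ediam_image_le_of_hasFDerivWithinAt_zero {D : Set E} (hD : Convex ℝ D) {c : E}
    {ρ R : ℝ} (hρ : 0 < ρ) (hcD : closedBall c ρ ⊆ D) (hDc : D ⊆ closedBall c (R * ρ))
    {ι : Type*} {f : E → lp (fun _ : ι => ℝ) ∞} {L : ℝ≥0} (hf : LipschitzOnWith L f D)
    {S : Set E} (hS : ∀ i, ∀ y ∈ D \ S, HasFDerivWithinAt (fun y => f y i) (0 : E →L[ℝ] ℝ) D y) :
    ediam (f '' D) ≤ L * (2 * (ENNReal.ofReal ((R + 1) ^ finrank ℝ E / finrank ℝ E) *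
      (finrank ℝ E * μ (ball 0 1) + 1) / μ (ball 0 1) * μ S ^ ((finrank ℝ E : ℝ)⁻¹))) := by
  set T := toMeasurable μ S
  have hT : MeasurableSet T := measurableSet_toMeasurable μ S
  set bound := ENNReal.ofReal ((R + 1) ^ finrank ℝ E / finrank ℝ E) *
      (finrank ℝ E * μ (ball 0 1) + 1) / μ (ball 0 1) * μ S ^ ((finrank ℝ E : ℝ)⁻¹)
  have hseg : ∀ i, ∀ p ∈ D, ∀ z ∈ D, edist (f z i) (f p i) ≤ L * segmentLength T p z :=
    fun i p hp z hz => edist_le_mul_segmentLength hD ((LipschitzOnWith.coordinate _ _ _).1 hf i)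
      (fun y hy => hS i y ⟨hy.1, fun h => hy.2 (subset_toMeasurable μ S h)⟩) hp hz
  have havg : ∀ x ∈ D, ⨍⁻ z in closedBall c ρ, segmentLength T x z ∂μ ≤ bound := fun x hx => by
    simpa only [T, measure_toMeasurable] using setLAverage_segmentLength_le μ hT hρ (hDc hx)
  have hB0 : μ (closedBall c ρ) ≠ 0 := (measure_closedBall_pos μ c hρ).ne'
  have hBtop : μ (closedBall c ρ) ≠ ⊤ := measure_closedBall_lt_top.ne
  refine ediam_image_le_iff.2 fun x hx y hy => ?_
  obtain ⟨z, hz, hzle⟩ := exists_le_setLAverage hB0 hBtop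
    ((measurable_segmentLength hT x).add (measurable_segmentLength hT y)).aemeasurable
  have hsum : segmentLength T x z + segmentLength T y z ≤ 2 * bound := by
    simp only [Pi.add_apply] at hzle
    rw [setLAverage_eq, lintegral_add_left (measurable_segmentLength hT x), ENNReal.add_div,
      ← setLAverage_eq, ← setLAverage_eq] at hzle
    exact two_mul bound ▸ hzle.trans (add_le_add (havg x hx) (havg y hy))
  refine lp.edist_le_of_forall_le fun i => ?_
  calc edist (f x i) (f y i) ≤ edist (f z i) (f x i) + edist (f z i) (f y i) :=
        edist_triangle_left _ _ _
    _ ≤ L * segmentLength T x z + L * segmentLength T y z :=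
        add_le_add (hseg i x hx z (hcD hz)) (hseg i y hy z (hcD hz))
    _ ≤ L * (2 * bound) := by rw [← mul_add]; gcongr

end Segment

section Cube

variable {k : ℕ}

theorem convex_closedCube (c : EucSp k) (d : ℝ) : Convex ℝ (closedCube c d) := by
  have : closedCube c d = ⋂ i, EuclideanSpace.proj i ⁻¹' Icc (c i - d / 2) (c i + d / 2) := by
    ext x; simp [closedCube, abs_sub_le_iff, add_comm, and_comm]
  rw [this]
  exact convex_iInter fun i =>
    (convex_Icc _ _).linear_preimage (EuclideanSpace.proj i).toLinearMap

theorem closedBall_subset_closedCube (c : EucSp k) (d : ℝ) :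
    closedBall c (d / 2) ⊆ closedCube c d :=
  fun x hx i => (PiLp.norm_apply_le (x - c) i).trans (mem_closedBall_iff_norm.1 hx)

theorem closedCube_subset_closedBall (c : EucSp k) {d : ℝ} (hd : 0 ≤ d) :
    closedCube c d ⊆ closedBall c (k * (d / 2)) := by
  intro x hx
  rw [mem_closedBall_iff_norm, EuclideanSpace.norm_eq, Real.sqrt_le_left (by positivity)]
  calc ∑ i, ‖(x - c) i‖ ^ 2 ≤ ∑ _i : Fin k, (d / 2) ^ 2 := by
        gcongr with i; exact hx i
    _ = k * (d / 2) ^ 2 := by simp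
    _ ≤ (k * (d / 2)) ^ 2 := by
        rw [mul_pow]; gcongr; exact_mod_cast Nat.le_self_pow two_ne_zero k

theorem exists_closedBall_subset_of_closedCube_or_closedBall (hk : 1 ≤ k) {D : Set (EucSp k)}
    (hD : (∃ (c : EucSp k) (d : ℝ), 0 < d ∧ D = closedCube c d) ∨
      ∃ (c : EucSp k) (r : ℝ), 0 < r ∧ D = closedBall c r) :
    Convex ℝ D ∧ ∃ c ρ, 0 < ρ ∧ closedBall c ρ ⊆ D ∧ D ⊆ closedBall c (k * ρ) := by
  rcases hD with ⟨c, d, hd, rfl⟩ | ⟨c, r, hr, rfl⟩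
  · exact ⟨convex_closedCube c d, c, d / 2, by positivity, closedBall_subset_closedCube c d,
      closedCube_subset_closedBall c hd.le⟩
  · refine ⟨convex_closedBall c r, c, r, hr, subset_rfl, closedBall_subset_closedBall ?_⟩
    exact le_mul_of_one_le_left hr.le (by exact_mod_cast hk)

end Cube

/-- Lemma 5790: there is `C(k) > 0` such that for every cube or ball
`D ⊆ ℝ^k` and every `L`-Lipschitz `f : D → ℓ^∞`, with
`A = {x ∈ D : Df(x) = 0}` (component-wise derivative),
`diam (f(D)) ≤ C(k) L ℋ^k(D \ A)^{1/k}`. -/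
theorem stmt15 (k : ℕ) :
    ∃ C : ℝ, 0 < C ∧
      ∀ (D : Set (EucSp k)),
        ((∃ (c : EucSp k) (d : ℝ), 0 < d ∧ D = closedCube c d) ∨
          ∃ (c : EucSp k) (r : ℝ), 0 < r ∧ D = Metric.closedBall c r) →
        ∀ (f : EucSp k → LpInfty) (L : ℝ≥0), LipschitzOnWith L f D →
          ∀ (A : Set (EucSp k)),
            A = {x ∈ D | ∀ i : ℕ, HasFDerivWithinAt (fun y => f y i) (0 : EucSp k →L[ℝ] ℝ) D x} →
            EMetric.diam (f '' D) ≤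
              ENNReal.ofReal (C * L) * volume (D \ A) ^ ((k : ℝ)⁻¹) := by
  rcases Nat.eq_zero_or_pos k with rfl | hk
  · refine ⟨1, one_pos, fun D _ f _ _ _ _ => ?_⟩
    exact (ediam_subsingleton (Subsingleton.image subsingleton_of_subsingleton f)).le.trans
      zero_le
  have : Nontrivial (EucSp k) := Module.nontrivial_of_finrank_pos (R := ℝ) (by simpa using hk)
  set ω := volume (ball (0 : EucSp k) 1)
  set K := ENNReal.ofReal ((k + 1) ^ k / k) * (k * ω + 1) / ω
  have hω0 : ω ≠ 0 := (measure_ball_pos volume 0 one_pos).ne'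
  have hωtop : ω ≠ ⊤ := measure_ball_lt_top.ne
  have hKtop : K ≠ ⊤ := ENNReal.div_ne_top (by finiteness) hω0
  have hK : 0 < K.toReal := by
    refine ENNReal.toReal_pos (ENNReal.div_pos_iff.2 ⟨mul_ne_zero ?_ (by simp), hωtop⟩).ne' hKtop
    exact (ENNReal.ofReal_pos.2 (by positivity)).ne'
  refine ⟨2 * K.toReal, by positivity, ?_⟩
  rintro D hD f L hf A hA
  obtain ⟨hconv, c, ρ, hρ, hcD, hDc⟩ := exists_closedBall_subset_of_closedCube_or_closedBall hk hD
  have hderiv : ∀ i, ∀ y ∈ D \ (D \ A),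
      HasFDerivWithinAt (fun y => f y i) (0 : EucSp k →L[ℝ] ℝ) D y := by
    intro i y hy
    have hyA : y ∈ A := by_contra fun h => hy.2 ⟨hy.1, h⟩
    exact (hA ▸ hyA).2 i
  refine (ediam_image_le_of_hasFDerivWithinAt_zero volume hconv hρ hcD hDc hf hderiv).trans_eq ?_
  rw [finrank_euclideanSpace_fin, ENNReal.ofReal_mul (by positivity),
    ENNReal.ofReal_mul (by positivity), ENNReal.ofReal_toReal hKtop, ENNReal.ofReal_coe_nnreal,
    ENNReal.ofReal_ofNat]
  ring
end
end
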